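/- Let p be a prime number, s a positive integer, and n a positive integer. If n = p^s·(3t^2 + t)/2 for some integer t, then τ_{p^s}(n+1) ≡ (-1)^t (mod p); otherwise τ_{p^s}(n+1) ≡ 0 (mod p). -/

import Mathlib

open PowerSeries Finset

/-- `1 - X^(m+1)` is a unit in `ℤ⟦X⟧`. -/
lemma isUnit_one_sub_X_pow (m : ℕ) :
    IsUnit ((1 : PowerSeries ℤ) - (PowerSeries.X : PowerSeries ℤ) ^ (m + 1)) := by
  rw [PowerSeries.isUnit_iff_constantCoeff]
  simp

/-- `tau k n` is the coefficient of `q^n` in `q·∏_{m=1}^∞ (1-q^m)^k` (`k : ℤ`).  Since each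
factor `(1-q^m)^(±|k|)` is `1 + (terms of degree ≥ m)`, the coefficient of `q^(n-1)` in the
infinite product agrees with that of the finite product `∏_{m=1}^{n} (1-q^m)^k`, computed in
the unit group of `ℤ⟦X⟧` (so that negative exponents make sense). -/
noncomputable def tau (k : ℤ) (n : ℕ) : ℤ :=
  PowerSeries.coeff (n - 1)
    ((↑(∏ m ∈ Finset.range n, (isUnit_one_sub_X_pow m).unit ^ k) : PowerSeries ℤ))

/-!
Modulo `p`, Frobenius turns `∏ (1 - q^m)^(p^s)` into `∏ (1 - q^(p^s m))`, i.e. Euler's product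
`∏ (1 - q^m)` with `q` replaced by `q^(p^s)`. By Euler's pentagonal number theorem the
coefficient of `q^n` in the latter is `(-1)^k` when `n = p^s k(3k-1)/2` and `0` otherwise.
-/

theorem tau_natCast (d n : ℕ) :
    tau d (n + 1) = coeff n ((∏ m ∈ range (n + 1), (1 - X ^ (m + 1) : ℤ⟦X⟧)) ^ d) := by
  simp [tau, Units.coe_prod, ← prod_pow]

theorem PowerSeries.map_iterateFrobenius_expand {R : Type*} [CommRing R] (p : ℕ) (hp : p ≠ 0)
    [ExpChar R p] (f : R⟦X⟧) (s : ℕ) :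
    map (iterateFrobenius R p s) (expand (p ^ s) (pow_ne_zero s hp) f) = f ^ p ^ s :=
  MvPowerSeries.map_iterateFrobenius_expand p hp f s

theorem ZMod.powerSeries_pow_prime_pow_eq_expand (p : ℕ) [Fact p.Prime] (f : (ZMod p)⟦X⟧)
    (s : ℕ) : f ^ p ^ s = expand (p ^ s) (pow_ne_zero s (NeZero.ne p)) f := by
  rw [← PowerSeries.map_iterateFrobenius_expand p (NeZero.ne p),
    RingHom.ext_zmod (iterateFrobenius _ p s) (RingHom.id _), map_id, id]

theorem X_pow_dvd_prod_one_sub_X_pow_sub_one {R : Type*} [CommRing R] {N : ℕ} {s : Finset ℕ}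
    (hs : ∀ m ∈ s, N ≤ m) : X ^ N ∣ ∏ m ∈ s, (1 - X ^ (m + 1) : R⟦X⟧) - 1 := by
  refine prod_induction _ (fun g => X ^ N ∣ g - 1) (fun g h hg hh => ?_) (by simp) fun m hm => ?_
  · rw [show g * h - 1 = (g - 1) * h + (h - 1) by ring]
    exact dvd_add (dvd_mul_of_dvd_left hg h) hh
  · rw [sub_sub_cancel_left, dvd_neg]
    exact pow_dvd_pow X (by linarith [hs m hm])

theorem coeff_prod_range_one_sub_X_pow_of_lt {R : Type*} [CommRing R] {n N : ℕ} (h : n < N) :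
    coeff n (∏ m ∈ range N, (1 - X ^ (m + 1) : R⟦X⟧)) = coeff n (pentagonalSeries R) := by
  obtain ⟨s, hs⟩ := Filter.eventually_atTop.1 (coeff_prod_one_sub_X_pow_eventually_eq R n)
  obtain ⟨g, hg⟩ := X_pow_dvd_prod_one_sub_X_pow_sub_one (R := R) (s := s \ range N) (N := N)
    (by simp)
  rw [← hs (s ∪ range N) subset_union_left, ← sdiff_union_self_eq_union,
    prod_union sdiff_disjoint, sub_eq_iff_eq_add.1 hg, add_mul, one_mul, map_add, mul_assoc, coeff_X_pow_mul',
    if_neg (by omega), zero_add]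

theorem intCast_tau_prime_pow (p : ℕ) [Fact p.Prime] (s n : ℕ) :
    (tau ((p : ℤ) ^ s) (n + 1) : ZMod p) =
      coeff n (expand (p ^ s) (pow_ne_zero s (NeZero.ne p)) (pentagonalSeries (ZMod p))) := by
  rw [← Nat.cast_pow, tau_natCast, ← eq_intCast (Int.castRingHom (ZMod p)), ← coeff_map]
  simp only [map_pow, map_prod, map_sub, map_one, map_X]
  rw [ZMod.powerSeries_pow_prime_pow_eq_expand, coeff_expand, coeff_expand]
  split_ifs
  · exact coeff_prod_range_one_sub_X_pow_of_lt (Nat.lt_succ_of_le (Nat.div_le_self n _))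
  · rfl

theorem two_mul_eq_mul_iff_eq_mul_pentagonal_neg (n d : ℕ) (t : ℤ) :
    2 * (n : ℤ) = d * (3 * t ^ 2 + t) ↔ n = d * pentagonal (-t) := by
  have hpent := two_mul_natCast_pentagonal_neg t
  constructor <;> intro h
  · have : 2 * (n : ℤ) = 2 * (d * pentagonal (-t)) := by linear_combination h - d * hpent
    exact_mod_cast mul_left_cancel₀ two_ne_zero this
  · rw [h]; push_cast; linear_combination d * hpent

theorem tau_prime_pow_modEq_general (p : ℕ) (hp : p.Prime) (s : ℕ) (n : ℕ) :
    (∀ t : ℤ, 2 * (n : ℤ) = (p : ℤ) ^ s * (3 * t ^ 2 + t) →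
      tau ((p : ℤ) ^ s) (n + 1) ≡ (((-1 : ℤˣ) ^ t : ℤˣ) : ℤ) [ZMOD (p : ℤ)]) ∧
    ((¬ ∃ t : ℤ, 2 * (n : ℤ) = (p : ℤ) ^ s * (3 * t ^ 2 + t)) →
      tau ((p : ℤ) ^ s) (n + 1) ≡ 0 [ZMOD (p : ℤ)]) := by
  have : Fact p.Prime := ⟨hp⟩
  simp only [← ZMod.intCast_eq_intCast_iff, intCast_tau_prime_pow, Int.cast_zero]
  simp only [show (p : ℤ) ^ s = (p ^ s : ℕ) by push_cast; rfl,
    two_mul_eq_mul_iff_eq_mul_pentagonal_neg]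
  refine ⟨fun t ht => ?_, fun h => ?_⟩
  · rw [ht, coeff_expand_mul, coeff_pentagonalSeries_pentagonal, Int.negOnePow_neg,
      Int.negOnePow_def]
  · rw [coeff_expand]
    split_ifs with hdvd
    · obtain ⟨j, rfl⟩ := hdvd
      rw [Nat.mul_div_cancel_left _ (pow_pos hp.pos s)]
      exact coeff_pentagonalSeries_eq_zero _ fun ⟨k, (hk : pentagonal k = j)⟩ =>
        h ⟨-k, by rw [neg_neg, hk]⟩
    · rfl

/-- For a prime `p` and `s ≥ 1`: if `n = p^s·(3t²+t)/2` for some integer `t`, then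
`τ_{p^s}(n+1) ≡ (-1)^t (mod p)` (the `t` with a given pentagonal value being unique);
otherwise `τ_{p^s}(n+1) ≡ 0 (mod p)`. -/
theorem tau_prime_pow_modEq (p : ℕ) (hp : p.Prime) (s : ℕ) (hs : 0 < s) (n : ℕ) (hn : 0 < n) :
    (∀ t : ℤ, 2 * (n : ℤ) = (p : ℤ) ^ s * (3 * t ^ 2 + t) →
      tau ((p : ℤ) ^ s) (n + 1) ≡ (((-1 : ℤˣ) ^ t : ℤˣ) : ℤ) [ZMOD (p : ℤ)]) ∧
    ((¬ ∃ t : ℤ, 2 * (n : ℤ) = (p : ℤ) ^ s * (3 * t ^ 2 + t)) →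
      tau ((p : ℤ) ^ s) (n + 1) ≡ 0 [ZMOD (p : ℤ)]) :=
  tau_prime_pow_modEq_general p hp s n
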